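/- Maximal control of quotients of Poisson integrals on cones: for every aperture c > 0 there is a constant C_c > 0 such that for all finite Borel measures η₁ and η₂ on ℝ with η₂ ≠ 0, with Poisson integrals h₁ and h₂, for every x₀ ∈ ℝ and every z in the cone Γ_c(x₀), one has h₁(z)/h₂(z) ≤ C_c · M_{η₁/η₂}(x₀), where M_{η₁/η₂}(x₀) = sup_{r>0} η₁([x₀−r, x₀+r])/η₂([x₀−r, x₀+r]) ∈ [0,∞]. -/

import Mathlib

/-!
Move `z = a + iy` in the cone horizontally to the vertex `w = x₀ + iy`: since `|a - x₀| ≤ c y`, the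
kernels `P(z, ·)` and `P(w, ·)` are comparable up to the factor `2c² + 2`, in both directions. At
the vertex the kernel is radial about `x₀`, so by the layer-cake formula `h_η(w)` is an average of
the masses `η(I)` of intervals `I` centred at `x₀`, each of which satisfies
`η₁(I) ≤ M_{η₁/η₂}(x₀) η₂(I)`.
-/

open MeasureTheory Filter Topology
open scoped ENNReal

/-- The Poisson kernel of the upper half-plane. -/
noncomputable def upperHalfPlanePoissonKernel (z : ℂ) (x : ℝ) : ℝ :=
  z.im / ((z.re - x) ^ 2 + z.im ^ 2)

/-- The Poisson integral of a measure on `ℝ`. -/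
noncomputable def poissonIntegral (η : Measure ℝ) (z : ℂ) : ℝ :=
  ∫ x, upperHalfPlanePoissonKernel z x ∂η

/-- The nontangential cone of aperture `c` at `x₀`. -/
def cone (x₀ c : ℝ) : Set ℂ :=
  {z : ℂ | 0 < z.im ∧ |z.re - x₀| ≤ c * z.im}

/-- The two-measure maximal function over symmetric intervals. -/
noncomputable def maximalFunction (η₁ η₂ : Measure ℝ) (x₀ : ℝ) : ENNReal :=
  ⨆ (r : ℝ) (_ : 0 < r),
    η₁ (Set.Icc (x₀ - r) (x₀ + r)) / η₂ (Set.Icc (x₀ - r) (x₀ + r))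

open Set

section Kernel

variable {z w : ℂ}

lemma upperHalfPlanePoissonKernel_pos (hz : 0 < z.im) (x : ℝ) :
    0 < upperHalfPlanePoissonKernel z x :=
  div_pos hz (by positivity)

lemma upperHalfPlanePoissonKernel_le_inv_im (hz : 0 < z.im) (x : ℝ) :
    upperHalfPlanePoissonKernel z x ≤ 1 / z.im := by
  rw [upperHalfPlanePoissonKernel, div_le_div_iff₀ (by positivity) hz]
  nlinarith [sq_nonneg (z.re - x)]

lemma measurable_upperHalfPlanePoissonKernel (z : ℂ) :
    Measurable (upperHalfPlanePoissonKernel z) :=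
  measurable_const.div (by fun_prop)

lemma upperHalfPlanePoissonKernel_le_mul_of_im_eq {c : ℝ} (hz : 0 < z.im) (him : w.im = z.im)
    (hre : |z.re - w.re| ≤ c * z.im) (x : ℝ) :
    upperHalfPlanePoissonKernel z x ≤ (2 * c ^ 2 + 2) * upperHalfPlanePoissonKernel w x := by
  obtain ⟨hre₁, hre₂⟩ := abs_le.mp hre
  have hsq : (z.re - w.re) ^ 2 ≤ c ^ 2 * z.im ^ 2 := by nlinarith
  -- `(w.re - x)² ≤ 2 (z.re - x)² + 2 (z.re - w.re)²`
  have hden : (w.re - x) ^ 2 + z.im ^ 2 ≤ (2 * c ^ 2 + 2) * ((z.re - x) ^ 2 + z.im ^ 2) := by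
    nlinarith [sq_nonneg (w.re - 2 * z.re + x), sq_nonneg (c * (z.re - x))]
  rw [upperHalfPlanePoissonKernel, upperHalfPlanePoissonKernel, him, mul_div_assoc',
    div_le_div_iff₀ (by positivity) (by positivity)]
  nlinarith [mul_le_mul_of_nonneg_left hden hz.le]

lemma setOf_le_upperHalfPlanePoissonKernel {x₀ y t : ℝ} (hy : 0 < y) (ht : 0 < t) :
    {x | t ≤ upperHalfPlanePoissonKernel ⟨x₀, y⟩ x} = {x | (x - x₀) ^ 2 ≤ y / t - y ^ 2} := by
  ext x
  simp only [mem_ofPred_eq, upperHalfPlanePoissonKernel]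
  rw [le_div_iff₀' (by positivity), le_sub_iff_add_le, le_div_iff₀ ht]
  ring_nf

end Kernel

section PoissonLIntegral

noncomputable def poissonLIntegral (η : Measure ℝ) (z : ℂ) : ℝ≥0∞ :=
  ∫⁻ x, ENNReal.ofReal (upperHalfPlanePoissonKernel z x) ∂η

variable {η : Measure ℝ} {z w : ℂ}

lemma poissonLIntegral_ne_top [IsFiniteMeasure η] (hz : 0 < z.im) : poissonLIntegral η z ≠ ∞ := by
  refine ne_top_of_le_ne_top ?_ (lintegral_mono fun x =>
    ENNReal.ofReal_le_ofReal (upperHalfPlanePoissonKernel_le_inv_im hz x))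
  simp [lintegral_const, ENNReal.mul_eq_top]

lemma poissonLIntegral_pos (hη : η ≠ 0) (hz : 0 < z.im) : 0 < poissonLIntegral η z := by
  rw [poissonLIntegral,
    lintegral_pos_iff_support (measurable_upperHalfPlanePoissonKernel z).ennreal_ofReal]
  have hsupp : Function.support (fun x => ENNReal.ofReal (upperHalfPlanePoissonKernel z x)) =
      univ :=
    eq_univ_of_forall fun x => by simpa using upperHalfPlanePoissonKernel_pos hz x
  rw [hsupp]
  exact Measure.measure_univ_pos.mpr hη

lemma ofReal_poissonIntegral [IsFiniteMeasure η] (hz : 0 < z.im) :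
    ENNReal.ofReal (poissonIntegral η z) = poissonLIntegral η z := by
  rw [poissonIntegral, integral_eq_lintegral_of_nonneg_ae
      (Eventually.of_forall fun x => (upperHalfPlanePoissonKernel_pos hz x).le)
      (measurable_upperHalfPlanePoissonKernel z).aestronglyMeasurable]
  exact ENNReal.ofReal_toReal (poissonLIntegral_ne_top hz)

lemma ofReal_poissonIntegral_div {η₁ η₂ : Measure ℝ} [IsFiniteMeasure η₁] [IsFiniteMeasure η₂]
    (hη₂ : η₂ ≠ 0) (hz : 0 < z.im) :
    ENNReal.ofReal (poissonIntegral η₁ z / poissonIntegral η₂ z) =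
      poissonLIntegral η₁ z / poissonLIntegral η₂ z := by
  have hpos : 0 < poissonIntegral η₂ z := by
    rw [← ENNReal.ofReal_pos, ofReal_poissonIntegral hz]
    exact poissonLIntegral_pos hη₂ hz
  rw [ENNReal.ofReal_div_of_pos hpos, ofReal_poissonIntegral hz, ofReal_poissonIntegral hz]

lemma poissonLIntegral_le_of_forall_le {K : ℝ} (hK : 0 ≤ K)
    (h : ∀ x, upperHalfPlanePoissonKernel z x ≤ K * upperHalfPlanePoissonKernel w x) :
    poissonLIntegral η z ≤ ENNReal.ofReal K * poissonLIntegral η w := by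
  rw [poissonLIntegral, poissonLIntegral, ← lintegral_const_mul' _ _ ENNReal.ofReal_ne_top]
  refine lintegral_mono fun x => ?_
  rw [← ENNReal.ofReal_mul hK]
  exact ENNReal.ofReal_le_ofReal (h x)

end PoissonLIntegral

section Maximal

variable (η₁ η₂ : Measure ℝ) [IsFiniteMeasure η₂] {x₀ : ℝ}

lemma measure_Icc_le_maximalFunction_mul (hM : maximalFunction η₁ η₂ x₀ ≠ ∞) {r : ℝ}
    (hr : 0 < r) :
    η₁ (Icc (x₀ - r) (x₀ + r)) ≤ maximalFunction η₁ η₂ x₀ * η₂ (Icc (x₀ - r) (x₀ + r)) :=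
  (ENNReal.div_le_iff_le_mul (Or.inr hM) (Or.inl (measure_ne_top _ _))).mp <|
    le_iSup₂ (f := fun (r : ℝ) (_ : 0 < r) =>
      η₁ (Icc (x₀ - r) (x₀ + r)) / η₂ (Icc (x₀ - r) (x₀ + r))) r hr

-- For `s = 0` the set is the point `{x₀}`, which the maximal function does not see.
lemma measure_setOf_sq_le_le_maximalFunction_mul (hM : maximalFunction η₁ η₂ x₀ ≠ ∞) {s : ℝ}
    (hs : s ≠ 0) :
    η₁ {x | (x - x₀) ^ 2 ≤ s} ≤ maximalFunction η₁ η₂ x₀ * η₂ {x | (x - x₀) ^ 2 ≤ s} := by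
  rcases hs.lt_or_gt with hs | hs
  · have hempty : {x : ℝ | (x - x₀) ^ 2 ≤ s} = ∅ :=
      eq_empty_of_forall_notMem fun x hx => by nlinarith [sq_nonneg (x - x₀), hx.out]
    simp [hempty]
  · have hIcc : {x : ℝ | (x - x₀) ^ 2 ≤ s} = Icc (x₀ - √s) (x₀ + √s) := by
      ext x
      rw [mem_ofPred_eq, ← sq_abs, ← Real.le_sqrt (abs_nonneg _) hs.le, abs_le, mem_Icc]
      constructor <;> rintro ⟨h₁, h₂⟩ <;> constructor <;> linarith
    rw [hIcc]
    exact measure_Icc_le_maximalFunction_mul η₁ η₂ hM (Real.sqrt_pos.mpr hs)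

lemma poissonLIntegral_le_maximalFunction_mul {y : ℝ} (hy : 0 < y)
    (hM : maximalFunction η₁ η₂ x₀ ≠ ∞) :
    poissonLIntegral η₁ ⟨x₀, y⟩ ≤ maximalFunction η₁ η₂ x₀ * poissonLIntegral η₂ ⟨x₀, y⟩ := by
  have hnonneg : ∀ x, 0 ≤ upperHalfPlanePoissonKernel ⟨x₀, y⟩ x := fun x =>
    (upperHalfPlanePoissonKernel_pos (z := ⟨x₀, y⟩) hy x).le
  rw [poissonLIntegral, poissonLIntegral,
    lintegral_eq_lintegral_meas_le η₁ (Eventually.of_forall hnonneg)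
      (measurable_upperHalfPlanePoissonKernel _).aemeasurable,
    lintegral_eq_lintegral_meas_le η₂ (Eventually.of_forall hnonneg)
      (measurable_upperHalfPlanePoissonKernel _).aemeasurable,
    ← lintegral_const_mul' _ _ hM]
  refine lintegral_mono_ae ?_
  filter_upwards [ae_restrict_mem measurableSet_Ioi,
    ae_restrict_of_ae (Measure.ae_ne volume (1 / y))] with t (ht : 0 < t) hty
  rw [setOf_le_upperHalfPlanePoissonKernel hy ht]
  refine measure_setOf_sq_le_le_maximalFunction_mul η₁ η₂ hM fun hs => hty ?_
  field_simp at hs ⊢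
  nlinarith

end Maximal

theorem maximal_control_of_quotients :
    ∀ c > (0 : ℝ), ∃ C > (0 : ℝ),
      ∀ (η₁ η₂ : Measure ℝ), IsFiniteMeasure η₁ → IsFiniteMeasure η₂ → η₂ ≠ 0 →
        ∀ (x₀ : ℝ) (z : ℂ), z ∈ cone x₀ c →
          ENNReal.ofReal (poissonIntegral η₁ z / poissonIntegral η₂ z) ≤
            ENNReal.ofReal C * maximalFunction η₁ η₂ x₀ := by
  intro c hc
  set K : ℝ := 2 * c ^ 2 + 2
  refine ⟨K ^ 2, by positivity, ?_⟩
  intro η₁ η₂ _ _ hη₂ x₀ z ⟨hz, hre⟩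
  set M := maximalFunction η₁ η₂ x₀
  rcases eq_or_ne M ∞ with hM | hM
  · rw [hM, ENNReal.mul_top (ENNReal.ofReal_pos.mpr (by positivity)).ne']
    exact le_top
  let w : ℂ := ⟨x₀, z.im⟩
  rw [ofReal_poissonIntegral_div hη₂ hz, ENNReal.div_le_iff_le_mul
    (Or.inl (poissonLIntegral_pos hη₂ hz).ne') (Or.inl (poissonLIntegral_ne_top hz))]
  calc poissonLIntegral η₁ z
      ≤ ENNReal.ofReal K * poissonLIntegral η₁ w :=
        poissonLIntegral_le_of_forall_le (by positivity)
          (upperHalfPlanePoissonKernel_le_mul_of_im_eq hz rfl hre)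
    _ ≤ ENNReal.ofReal K * (M * poissonLIntegral η₂ w) := by
        gcongr
        exact poissonLIntegral_le_maximalFunction_mul η₁ η₂ hz hM
    _ ≤ ENNReal.ofReal K * (M * (ENNReal.ofReal K * poissonLIntegral η₂ z)) := by
        gcongr
        exact poissonLIntegral_le_of_forall_le (by positivity)
          (upperHalfPlanePoissonKernel_le_mul_of_im_eq hz rfl (by rwa [abs_sub_comm]))
    _ = ENNReal.ofReal (K ^ 2) * M * poissonLIntegral η₂ z := by
        rw [sq, ENNReal.ofReal_mul (by positivity)]
        ring
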